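/- Let m > n ≥ 1 be integers and let c : Sᵐ → ℝⁿ be the restriction to the unit sphere of the linear projection (x₁,…,x_{m+1}) ↦ (x₁,…,x_n). Then the induced continuous map c̄ : W_c → ℝⁿ (the unique map with c = c̄ ∘ q_c) is injective, its image is the closed unit ball Dⁿ = {p ∈ ℝⁿ : ‖p‖ ≤ 1}, and c̄ is a homeomorphism from the Reeb space W_c onto Dⁿ. -/

import Mathlib

/-- The Reeb equivalence relation of a map `c : X → Y`: two points are equivalent
iff they have the same value under `c` and lie in the same connected component of
the fiber of `c` through them. -/
def reebSetoid {X Y : Type*} [TopologicalSpace X] (c : X → Y) : Setoid X where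
  r x₁ x₂ := c x₁ = c x₂ ∧ x₂ ∈ connectedComponentIn (c ⁻¹' {c x₁}) x₁
  iseqv := by
    constructor
    · intro x
      exact ⟨rfl, mem_connectedComponentIn (by simp)⟩
    · rintro x y ⟨h1, h2⟩
      refine ⟨h1.symm, ?_⟩
      rw [h1] at h2
      rw [← connectedComponentIn_eq h2]
      exact mem_connectedComponentIn (by simp [h1])
    · rintro x y z ⟨h1, h2⟩ ⟨h3, h4⟩
      refine ⟨h1.trans h3, ?_⟩
      rw [connectedComponentIn_eq h2, h1]
      exact h4

/-- The Reeb space of a map `c : X → Y`, endowed with the quotient topology. -/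
def ReebSpace {X Y : Type*} [TopologicalSpace X] (c : X → Y) : Type _ :=
  Quotient (reebSetoid c)

instance {X Y : Type*} [TopologicalSpace X] (c : X → Y) : TopologicalSpace (ReebSpace c) :=
  instTopologicalSpaceQuotient

/-- The quotient map `q_c` onto the Reeb space. -/
def reebQuot {X Y : Type*} [TopologicalSpace X] (c : X → Y) : X → ReebSpace c :=
  Quotient.mk''

/-- The restriction to the unit sphere `Sᵐ ⊂ ℝ^{m+1}` of the projection onto the
first `n` coordinates. -/
noncomputable def sphereProj (m n : ℕ) (h : n ≤ m + 1) :
    (Metric.sphere (0 : EuclideanSpace ℝ (Fin (m + 1))) 1) → EuclideanSpace ℝ (Fin n) :=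
  fun p => WithLp.toLp 2 (fun i => (p : EuclideanSpace ℝ (Fin (m + 1))) (Fin.castLE h i))


section Aux
open Metric Set

lemma esq {K : ℕ} (x : EuclideanSpace ℝ (Fin K)) : ‖x‖ ^ 2 = ∑ i, x i ^ 2 := by
  rw [EuclideanSpace.norm_eq, Real.sq_sqrt (by positivity)]
  simp [Real.norm_eq_abs, sq_abs]

lemma sum_split (m n : ℕ) (hn : n ≤ m + 1) (f : Fin (m + 1) → ℝ) :
    ∑ j, f j = (∑ i : Fin n, f (Fin.castLE hn i)) +
      ∑ i : Fin (m + 1 - n), f ⟨n + i, by have := i.isLt; omega⟩ := by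
  rw [← (finSumFinEquiv.trans (finCongr (by omega : n + (m + 1 - n) = m + 1))).sum_comp f,
    Fintype.sum_sum_type]
  congr 1

noncomputable def glue (m n : ℕ) (a : EuclideanSpace ℝ (Fin n))
    (y : EuclideanSpace ℝ (Fin (m + 1 - n))) : EuclideanSpace ℝ (Fin (m + 1)) :=
  WithLp.toLp 2 (fun (j : Fin (m + 1)) =>
    if h : (j : ℕ) < n then a ⟨j, h⟩ else y ⟨(j : ℕ) - n, by have := j.isLt; omega⟩)

lemma glue_left {m n : ℕ} (hn : n ≤ m + 1) (a : EuclideanSpace ℝ (Fin n))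
    (y : EuclideanSpace ℝ (Fin (m + 1 - n))) (i : Fin n) :
    glue m n a y (Fin.castLE hn i) = a i := by
  simp [glue]

lemma glue_right {m n : ℕ} (a : EuclideanSpace ℝ (Fin n))
    (y : EuclideanSpace ℝ (Fin (m + 1 - n))) (i : Fin (m + 1 - n)) (h : n + (i : ℕ) < m + 1) :
    glue m n a y ⟨n + i, h⟩ = y i := by
  have h2 : ¬ (n + (i : ℕ) < n) := by omega
  simp only [glue, WithLp.ofLp_toLp]
  rw [dif_neg h2]
  exact congrArg y (Fin.ext (Nat.add_sub_cancel_left n i))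

lemma glue_norm_sq {m n : ℕ} (hn : n ≤ m + 1) (a : EuclideanSpace ℝ (Fin n))
    (y : EuclideanSpace ℝ (Fin (m + 1 - n))) :
    ‖glue m n a y‖ ^ 2 = ‖a‖ ^ 2 + ‖y‖ ^ 2 := by
  rw [esq, esq, esq, sum_split m n hn]
  congr 1
  · exact Finset.sum_congr rfl fun i _ => by rw [glue_left hn]
  · exact Finset.sum_congr rfl fun i _ => by rw [glue_right]

lemma glue_continuous (m n : ℕ) (a : EuclideanSpace ℝ (Fin n)) :
    Continuous (glue m n a) := by
  refine (PiLp.continuous_toLp 2 _).comp ?_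
  apply continuous_pi
  intro j
  by_cases h : (j : ℕ) < n
  · simp only [glue, dif_pos h]
    exact continuous_const
  · simp only [glue, dif_neg h]
    exact (continuous_apply _).comp (PiLp.continuous_ofLp 2 _)

lemma glue_norm_one {m n : ℕ} (hn : n ≤ m + 1) (a : EuclideanSpace ℝ (Fin n))
    (ha : ‖a‖ ≤ 1) (y : EuclideanSpace ℝ (Fin (m + 1 - n)))
    (hy : ‖y‖ = Real.sqrt (1 - ‖a‖ ^ 2)) : ‖glue m n a y‖ = 1 := by
  have h1 : (0:ℝ) ≤ 1 - ‖a‖ ^ 2 := by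
    have := norm_nonneg a; nlinarith
  have h2 : ‖glue m n a y‖ ^ 2 = 1 := by
    rw [glue_norm_sq hn, hy, Real.sq_sqrt h1]; ring
  have h3 := norm_nonneg (glue m n a y)
  nlinarith

lemma proj_glue {m n : ℕ} (hn : n ≤ m + 1) (a : EuclideanSpace ℝ (Fin n))
    (y : EuclideanSpace ℝ (Fin (m + 1 - n)))
    (hg : ‖glue m n a y‖ = 1) :
    sphereProj m n hn ⟨glue m n a y, by simpa using hg⟩ = a := by
  ext i
  exact glue_left hn a y i


lemma fiber_preconnected (m n : ℕ) (hn : 1 ≤ n) (hmn : n < m)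
    (x₀ : Metric.sphere (0 : EuclideanSpace ℝ (Fin (m + 1))) 1) :
    IsPreconnected {x : Metric.sphere (0 : EuclideanSpace ℝ (Fin (m + 1))) 1 |
      sphereProj m n (Nat.le_succ_of_le hmn.le) x =
        sphereProj m n (Nat.le_succ_of_le hmn.le) x₀} := by
  have hnm : n ≤ m + 1 := by omega
  set a : EuclideanSpace ℝ (Fin n) := sphereProj m n (by omega) x₀ with ha
  have hx₀ : ‖(x₀ : EuclideanSpace ℝ (Fin (m + 1)))‖ = 1 := by
    simpa using x₀.2
  have hx₀sq : ∑ j, ((x₀ : EuclideanSpace ℝ (Fin (m + 1))) j) ^ 2 = 1 := by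
    rw [← esq, hx₀]; norm_num
  have hsplit := sum_split m n hnm (fun j => ((x₀ : EuclideanSpace ℝ (Fin (m + 1))) j) ^ 2)
  have hasq : ‖a‖ ^ 2 = ∑ i : Fin n,
      ((x₀ : EuclideanSpace ℝ (Fin (m + 1))) (Fin.castLE hnm i)) ^ 2 := by
    rw [esq]; rfl
  have hrest : (0:ℝ) ≤ ∑ i : Fin (m + 1 - n),
      ((x₀ : EuclideanSpace ℝ (Fin (m + 1))) ⟨n + i, by have := i.isLt; omega⟩) ^ 2 :=
    Finset.sum_nonneg fun i _ => sq_nonneg _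
  have haone : ‖a‖ ≤ 1 := by
    have h1 : ‖a‖ ^ 2 ≤ 1 := by rw [hasq]; nlinarith [hsplit, hx₀sq]
    have := norm_nonneg a; nlinarith
  set r : ℝ := Real.sqrt (1 - ‖a‖ ^ 2) with hr
  -- the parametrizing map
  set f : (Metric.sphere (0 : EuclideanSpace ℝ (Fin (m + 1 - n))) r) →
      (Metric.sphere (0 : EuclideanSpace ℝ (Fin (m + 1))) 1) :=
    fun y => ⟨glue m n a y, by
      simpa using glue_norm_one hnm a haone y (mem_sphere_zero_iff_norm.mp y.2)⟩ with hf
  have hfiber : {x : Metric.sphere (0 : EuclideanSpace ℝ (Fin (m + 1))) 1 |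
      sphereProj m n (by omega) x = a} = Set.range f := by
    ext x
    constructor
    · intro hx
      set y : EuclideanSpace ℝ (Fin (m + 1 - n)) :=
        WithLp.toLp 2 (fun (i : Fin (m + 1 - n)) =>
          (x : EuclideanSpace ℝ (Fin (m + 1))) ⟨n + i, by have := i.isLt; omega⟩) with hy
      have hxsq : ∑ j, ((x : EuclideanSpace ℝ (Fin (m + 1))) j) ^ 2 = 1 := by
        rw [← esq]
        have : ‖(x : EuclideanSpace ℝ (Fin (m + 1)))‖ = 1 := by simpa using x.2
        rw [this]; norm_num
      have hxa : ∀ i : Fin n, (x : EuclideanSpace ℝ (Fin (m + 1))) (Fin.castLE hnm i) = a i :=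
        fun i => congrFun (congrArg WithLp.ofLp (show sphereProj m n hnm x = a from hx)) i
      have hysq : ‖y‖ ^ 2 = 1 - ‖a‖ ^ 2 := by
        rw [esq, hasq]
        have hs := sum_split m n hnm (fun j => ((x : EuclideanSpace ℝ (Fin (m + 1))) j) ^ 2)
        have hfst : ∑ i : Fin n, ((x : EuclideanSpace ℝ (Fin (m + 1))) (Fin.castLE hnm i)) ^ 2
            = ∑ i : Fin n, ((x₀ : EuclideanSpace ℝ (Fin (m + 1))) (Fin.castLE hnm i)) ^ 2 := by
          refine Finset.sum_congr rfl fun i _ => ?_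
          rw [hxa i]
          rfl
        rw [hxsq] at hs
        simp only [hy]
        nlinarith [hs, hfst]
      have hynorm : ‖y‖ = r := by
        rw [hr, ← hysq, Real.sqrt_sq (norm_nonneg y)]
      refine ⟨⟨y, by simpa using hynorm⟩, ?_⟩
      apply Subtype.ext
      ext j
      show glue m n a y j = (x : EuclideanSpace ℝ (Fin (m + 1))) j
      by_cases hj : (j : ℕ) < n
      · have : j = Fin.castLE hnm ⟨j, hj⟩ := Fin.ext rfl
        rw [this, glue_left hnm, hxa]
      · have hj2 : n + ((j : ℕ) - n) < m + 1 := by have := j.isLt; omega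
        have hje : j = ⟨n + ((j : ℕ) - n), hj2⟩ := Fin.ext (by simp; omega)
        rw [hje]
        exact glue_right a y ⟨(j : ℕ) - n, by have := j.isLt; omega⟩ hj2
    · rintro ⟨y, rfl⟩
      exact proj_glue hnm a y (glue_norm_one hnm a haone y (mem_sphere_zero_iff_norm.mp y.2))
  rw [show {x : Metric.sphere (0 : EuclideanSpace ℝ (Fin (m + 1))) 1 |
      sphereProj m n (by omega) x = sphereProj m n (by omega) x₀} =
      Set.range f from hfiber]
  -- the small sphere is a connected space
  have hrank : 1 < Module.rank ℝ (EuclideanSpace ℝ (Fin (m + 1 - n))) := by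
    rw [← Module.finrank_eq_rank, finrank_euclideanSpace_fin]
    · exact_mod_cast (by omega : 1 < m + 1 - n)
  have hconn : IsConnected (Metric.sphere (0 : EuclideanSpace ℝ (Fin (m + 1 - n))) r) :=
    isConnected_sphere hrank 0 (Real.sqrt_nonneg _)
  haveI : PreconnectedSpace (Metric.sphere (0 : EuclideanSpace ℝ (Fin (m + 1 - n))) r) :=
    Subtype.preconnectedSpace hconn.isPreconnected
  have hfc : Continuous f := by
    apply Continuous.subtype_mk
    exact (glue_continuous m n a).comp continuous_subtype_val
  exact isPreconnected_range hfc

lemma range_sphereProj (m n : ℕ) (hn : 1 ≤ n) (hmn : n < m) :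
    Set.range (sphereProj m n (Nat.le_succ_of_le hmn.le)) =
      Metric.closedBall (0 : EuclideanSpace ℝ (Fin n)) 1 := by
  have hnm : n ≤ m + 1 := by omega
  ext p
  simp only [Set.mem_range, Metric.mem_closedBall, dist_zero_right]
  constructor
  · rintro ⟨x, rfl⟩
    have hxsq : ∑ j, ((x : EuclideanSpace ℝ (Fin (m + 1))) j) ^ 2 = 1 := by
      rw [← esq]
      have : ‖(x : EuclideanSpace ℝ (Fin (m + 1)))‖ = 1 := by simpa using x.2
      rw [this]; norm_num
    have hs := sum_split m n hnm (fun j => ((x : EuclideanSpace ℝ (Fin (m + 1))) j) ^ 2)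
    have hrest : (0:ℝ) ≤ ∑ i : Fin (m + 1 - n),
        ((x : EuclideanSpace ℝ (Fin (m + 1))) ⟨n + i, by have := i.isLt; omega⟩) ^ 2 :=
      Finset.sum_nonneg fun i _ => sq_nonneg _
    have hpsq : ‖sphereProj m n (by omega : n ≤ m + 1) x‖ ^ 2 ≤ 1 := by
      rw [esq]
      have : ∑ i : Fin n, (sphereProj m n (by omega : n ≤ m + 1) x i) ^ 2
          = ∑ i : Fin n, ((x : EuclideanSpace ℝ (Fin (m + 1))) (Fin.castLE hnm i)) ^ 2 := rfl
      rw [this]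
      nlinarith [hs, hxsq]
    have := norm_nonneg (sphereProj m n (by omega : n ≤ m + 1) x)
    nlinarith
  · intro hp
    set y : EuclideanSpace ℝ (Fin (m + 1 - n)) :=
      EuclideanSpace.single (⟨0, by omega⟩ : Fin (m + 1 - n)) (Real.sqrt (1 - ‖p‖ ^ 2)) with hy
    have hynorm : ‖y‖ = Real.sqrt (1 - ‖p‖ ^ 2) := by
      rw [hy, EuclideanSpace.norm_single, Real.norm_eq_abs,
        abs_of_nonneg (Real.sqrt_nonneg _)]
    have hg := glue_norm_one hnm p hp y hynorm
    exact ⟨⟨glue m n p y, by simpa using hg⟩, proj_glue hnm p y hg⟩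

lemma sphereProj_continuous (m n : ℕ) (h : n ≤ m + 1) :
    Continuous (sphereProj m n h) := by
  refine (PiLp.continuous_toLp 2 _).comp ?_
  apply continuous_pi
  intro i
  exact (continuous_apply _).comp ((PiLp.continuous_ofLp 2 _).comp continuous_subtype_val)

end Aux

/-- For `m > n ≥ 1` and `c : Sᵐ → ℝⁿ` the projection of the unit sphere, the induced
map `c̄ : W_c → ℝⁿ` is injective, has image the closed unit ball `Dⁿ`, and is a
homeomorphism of the Reeb space `W_c` onto `Dⁿ`. -/
theorem reebSpace_sphereProj_homeomorph_closedBall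
    (m n : ℕ) (hn : 1 ≤ n) (hmn : n < m)
    (cbar : ReebSpace (sphereProj m n (by omega)) → EuclideanSpace ℝ (Fin n))
    (hcbar : sphereProj m n (by omega) = cbar ∘ reebQuot (sphereProj m n (by omega))) :
    Function.Injective cbar ∧
      Set.range cbar = Metric.closedBall (0 : EuclideanSpace ℝ (Fin n)) 1 ∧
      ∃ e : ReebSpace (sphereProj m n (by omega)) ≃ₜ
          (Metric.closedBall (0 : EuclideanSpace ℝ (Fin n)) 1),
        ∀ w, (e w : EuclideanSpace ℝ (Fin n)) = cbar w := by
  have hcb : ∀ x, cbar (reebQuot (sphereProj m n (by omega : n ≤ m + 1)) x)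
      = sphereProj m n (by omega : n ≤ m + 1) x := fun x => (congrFun hcbar x).symm
  have hinj : Function.Injective cbar := by
    intro w₁ w₂ h
    obtain ⟨x₁, rfl⟩ := Quotient.exists_rep w₁
    obtain ⟨x₂, rfl⟩ := Quotient.exists_rep w₂
    have hval : sphereProj m n (by omega : n ≤ m + 1) x₁
        = sphereProj m n (by omega : n ≤ m + 1) x₂ :=
      ((hcb x₁).symm.trans h).trans (hcb x₂)
    have hpre : IsPreconnected
        ((sphereProj m n (by omega : n ≤ m + 1)) ⁻¹'
          {sphereProj m n (by omega : n ≤ m + 1) x₁}) := by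
      have heq : (sphereProj m n (by omega : n ≤ m + 1)) ⁻¹'
          {sphereProj m n (by omega : n ≤ m + 1) x₁} =
          {x : Metric.sphere (0 : EuclideanSpace ℝ (Fin (m + 1))) 1 |
            sphereProj m n (by omega) x = sphereProj m n (by omega) x₁} := rfl
      rw [heq]
      exact fiber_preconnected m n hn hmn x₁
    have hmem : x₂ ∈ connectedComponentIn
        ((sphereProj m n (by omega : n ≤ m + 1)) ⁻¹'
          {sphereProj m n (by omega : n ≤ m + 1) x₁}) x₁ := by
      refine hpre.subset_connectedComponentIn rfl subset_rfl ?_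
      exact hval.symm
    exact Quotient.sound' ⟨hval, hmem⟩
  have hq : Function.Surjective (reebQuot (sphereProj m n (by omega : n ≤ m + 1))) :=
    Quotient.mk''_surjective
  have hrange : Set.range cbar = Metric.closedBall (0 : EuclideanSpace ℝ (Fin n)) 1 := by
    rw [← hq.range_comp cbar, ← hcbar]
    exact range_sphereProj m n hn hmn
  have hcont : Continuous cbar := by
    have hqm : Topology.IsQuotientMap (reebQuot (sphereProj m n (by omega : n ≤ m + 1))) :=
      isQuotientMap_quotient_mk'
    rw [hqm.continuous_iff, ← hcbar]
    exact sphereProj_continuous m n (by omega)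
  haveI : CompactSpace (ReebSpace (sphereProj m n (by omega : n ≤ m + 1))) :=
    Quotient.compactSpace
  refine ⟨hinj, hrange, ?_⟩
  have hgmem : ∀ w, cbar w ∈ Metric.closedBall (0 : EuclideanSpace ℝ (Fin n)) 1 := by
    intro w
    rw [← hrange]
    exact Set.mem_range_self w
  have hgbij : Function.Bijective
      (fun w => (⟨cbar w, hgmem w⟩ : (Metric.closedBall (0 : EuclideanSpace ℝ (Fin n)) 1))) := by
    constructor
    · intro w₁ w₂ h
      exact hinj (congrArg Subtype.val h)
    · rintro ⟨p, hp⟩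
      have hpr : p ∈ Set.range cbar := by rw [hrange]; exact hp
      obtain ⟨w, hw⟩ := hpr
      exact ⟨w, Subtype.ext hw⟩
  have hgcont : Continuous
      (fun w => (⟨cbar w, hgmem w⟩ : (Metric.closedBall (0 : EuclideanSpace ℝ (Fin n)) 1))) :=
    hcont.subtype_mk _
  exact ⟨hgcont.homeoOfEquivCompactToT2 (f := Equiv.ofBijective _ hgbij), fun w => rfl⟩
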